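/- Existence and uniqueness of the mild solution on a compact interval: Let (T(t))_{t≥0} be an exponentially stable C₀-semigroup on Y with constants M ≥ 1 and α > 0, let s₀ < S be reals and y₀ ∈ Y. Let F : [s₀,S] × Y × Y → Y be continuous with ‖F(s,x₁,y₁) − F(s,x₂,y₂)‖ ≤ L_F(s)·(‖x₁−x₂‖ + ‖y₁−y₂‖) for all s ∈ [s₀,S] and x_i, y_i ∈ Y, where L_F : [s₀,S] → [0,∞) is continuous; let H : [s₀,S] × [s₀,S] × Y → Y be continuous with ‖H(t,s,y₁) − H(t,s,y₂)‖ ≤ L_H(s)·‖y₁−y₂‖ for all t, s ∈ [s₀,S] and y₁, y₂ ∈ Y, where L_H : [s₀,S] → [0,∞) is continuous. Set L_F* = sup L_F and L_H* = sup L_H, and assume M_F := sup{ ‖F(s,0,z)‖ : s ∈ [s₀,S], z ∈ Y } < ∞ and M·(S−s₀)·L_F*·(1 + L_H*·(S−s₀)) < 1. Then there exists a unique continuous function y : [s₀,S] → Y satisfying y(s) = T(s−s₀) y₀ + ∫_{s₀}^s T(s−t)·F( t, y(t), ∫_{s₀}^t H(t,τ,y(τ)) dτ ) dt for all s ∈ [s₀,S].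 -/

import Mathlib

/-!
Clamping `T` to `t ≥ 0` and the time arguments of `F` and `H` to `[s₀, S]` makes all data
globally continuous without changing the equation on `[s₀, S]`. Its right-hand side then maps
the Banach space `C([s₀, S], Y)` to itself, and the Lipschitz bounds together with `‖T t‖ ≤ M`
show that it moves two functions at sup distance `d` to functions at distance at most
`M (S - s₀) L_F* (1 + L_H* (S - s₀)) d`. By the smallness assumption this map is a contraction,
and Banach's fixed point theorem gives the unique mild solution.
-/

open Set Filter Topology MeasureTheory intervalIntegral

theorem continuous_apply_of_forall_norm_le {𝕜 X E F : Type*} [NontriviallyNormedField 𝕜]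
    [TopologicalSpace X] [SeminormedAddCommGroup E] [SeminormedAddCommGroup F]
    [NormedSpace 𝕜 E] [NormedSpace 𝕜 F] {T : X → E →L[𝕜] F} {C : ℝ}
    (hT : ∀ x, Continuous fun t => T t x) (hC : ∀ t, ‖T t‖ ≤ C) :
    Continuous fun p : X × E => T p.1 p.2 := by
  refine continuous_iff_continuousAt.2 fun ⟨t₀, x₀⟩ => ?_
  have hsplit : (fun p : X × E => T p.1 p.2) = fun p => T p.1 x₀ + T p.1 (p.2 - x₀) := by
    funext p; rw [← map_add, add_sub_cancel]
  have hsmall : Tendsto (fun p : X × E => T p.1 (p.2 - x₀)) (𝓝 (t₀, x₀)) (𝓝 0) := by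
    refine squeeze_zero_norm (fun p => (T p.1).le_of_opNorm_le (hC p.1) _) ?_
    have hmajorant : Continuous fun p : X × E => C * ‖p.2 - x₀‖ := by fun_prop
    simpa using hmajorant.tendsto (t₀, x₀)
  rw [ContinuousAt, hsplit]
  simpa using (((hT x₀).comp continuous_fst).tendsto (t₀, x₀)).add hsmall

namespace MildSolution

variable {Y : Type*} [NormedAddCommGroup Y] [NormedSpace ℝ Y]

noncomputable def volterra (H : ℝ → ℝ → Y → Y) (s₀ : ℝ) (w : ℝ → Y) (t : ℝ) : Y :=
  ∫ τ in s₀..t, H t τ (w τ)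

noncomputable def mildMap (T : ℝ → Y →L[ℝ] Y) (F : ℝ → Y → Y → Y) (H : ℝ → ℝ → Y → Y)
    (s₀ : ℝ) (y₀ : Y) (w : ℝ → Y) (s : ℝ) : Y :=
  T (s - s₀) y₀ + ∫ t in s₀..s, T (s - t) (F t (w t) (volterra H s₀ w t))

variable {T T' : ℝ → Y →L[ℝ] Y} {F F' : ℝ → Y → Y → Y} {H H' : ℝ → ℝ → Y → Y}
  {s₀ S : ℝ} {y₀ : Y} {w w' : ℝ → Y}

theorem volterra_congr (hH : ∀ t ∈ Icc s₀ S, ∀ τ ∈ Icc s₀ S, H t τ = H' t τ)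
    (hw : EqOn w w' (Icc s₀ S)) {t : ℝ} (ht : t ∈ Icc s₀ S) :
    volterra H s₀ w t = volterra H' s₀ w' t := by
  refine integral_congr fun τ hτ => ?_
  rw [uIcc_of_le ht.1] at hτ
  have hτI : τ ∈ Icc s₀ S := ⟨hτ.1, hτ.2.trans ht.2⟩
  simp only [hH t ht τ hτI, hw hτI]

theorem mildMap_congr (hT : ∀ t ∈ Icc 0 (S - s₀), T t = T' t)
    (hF : ∀ t ∈ Icc s₀ S, F t = F' t) (hH : ∀ t ∈ Icc s₀ S, ∀ τ ∈ Icc s₀ S, H t τ = H' t τ)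
    (hw : EqOn w w' (Icc s₀ S)) {s : ℝ} (hs : s ∈ Icc s₀ S) :
    mildMap T F H s₀ y₀ w s = mildMap T' F' H' s₀ y₀ w' s := by
  have hT' : ∀ t ∈ Icc s₀ s, T (s - t) = T' (s - t) := fun t ht =>
    hT _ ⟨sub_nonneg.2 ht.2, by linarith [ht.1, hs.2]⟩
  unfold mildMap
  congr 1
  · rw [hT' s₀ ⟨le_rfl, hs.1⟩]
  · refine integral_congr fun t ht => ?_
    rw [uIcc_of_le hs.1] at ht
    have htI : t ∈ Icc s₀ S := ⟨ht.1, ht.2.trans hs.2⟩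
    simp only [hT' t ht, hF t htI, hw htI, volterra_congr hH hw htI]

theorem continuous_volterra (hH : Continuous fun p : ℝ × ℝ × Y => H p.1 p.2.1 p.2.2)
    (hw : Continuous w) : Continuous (volterra H s₀ w) :=
  continuous_parametric_intervalIntegral_of_continuous (μ := volume)
    (f := fun t τ => H t τ (w τ)) (by fun_prop) continuous_id

theorem continuous_mildMap (hT : Continuous fun p : ℝ × Y => T p.1 p.2)
    (hF : Continuous fun p : ℝ × Y × Y => F p.1 p.2.1 p.2.2)
    (hH : Continuous fun p : ℝ × ℝ × Y => H p.1 p.2.1 p.2.2) (hw : Continuous w) :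
    Continuous (mildMap T F H s₀ y₀ w) := by
  have hV := continuous_volterra (s₀ := s₀) hH hw
  unfold mildMap
  refine (hT.comp (by fun_prop : Continuous fun s => (s - s₀, y₀))).add ?_
  exact continuous_parametric_intervalIntegral_of_continuous (μ := volume)
    (f := fun s t => T (s - t) (F t (w t) (volterra H s₀ w t))) (by fun_prop) continuous_id

section Estimates

variable {M KF KH d : ℝ}

theorem norm_volterra_sub_le (hH : Continuous fun p : ℝ × ℝ × Y => H p.1 p.2.1 p.2.2)
    (hHlip : ∀ t τ y₁ y₂, ‖H t τ y₁ - H t τ y₂‖ ≤ KH * ‖y₁ - y₂‖) (hKH : 0 ≤ KH)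
    (hw : Continuous w) (hw' : Continuous w') (hd : ∀ τ, ‖w τ - w' τ‖ ≤ d) (t : ℝ) :
    ‖volterra H s₀ w t - volterra H s₀ w' t‖ ≤ KH * d * |t - s₀| := by
  have hint : ∀ v : ℝ → Y, Continuous v →
      IntervalIntegrable (fun τ => H t τ (v τ)) volume s₀ t := fun v hv =>
    Continuous.intervalIntegrable (by fun_prop) _ _
  rw [volterra, volterra, ← integral_sub (hint w hw) (hint w' hw')]
  exact norm_integral_le_of_norm_le_const fun τ _ =>
    (hHlip t τ _ _).trans (mul_le_mul_of_nonneg_left (hd τ) hKH)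

theorem norm_mildMap_sub_le (hT : Continuous fun p : ℝ × Y => T p.1 p.2) (hTM : ∀ t, ‖T t‖ ≤ M)
    (hF : Continuous fun p : ℝ × Y × Y => F p.1 p.2.1 p.2.2)
    (hFlip : ∀ t x₁ x₂ y₁ y₂, ‖F t x₁ y₁ - F t x₂ y₂‖ ≤ KF * (‖x₁ - x₂‖ + ‖y₁ - y₂‖))
    (hKF : 0 ≤ KF) (hH : Continuous fun p : ℝ × ℝ × Y => H p.1 p.2.1 p.2.2)
    (hHlip : ∀ t τ y₁ y₂, ‖H t τ y₁ - H t τ y₂‖ ≤ KH * ‖y₁ - y₂‖) (hKH : 0 ≤ KH)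
    (hw : Continuous w) (hw' : Continuous w') (hd : ∀ τ, ‖w τ - w' τ‖ ≤ d)
    {s : ℝ} (hs : s ∈ Icc s₀ S) :
    ‖mildMap T F H s₀ y₀ w s - mildMap T F H s₀ y₀ w' s‖ ≤
      M * (S - s₀) * KF * (1 + KH * (S - s₀)) * d := by
  have hM : 0 ≤ M := (norm_nonneg _).trans (hTM 0)
  have hd0 : 0 ≤ d := (norm_nonneg _).trans (hd 0)
  have hS : 0 ≤ S - s₀ := sub_nonneg.2 (hs.1.trans hs.2)
  have hint : ∀ v : ℝ → Y, Continuous v → IntervalIntegrable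
      (fun t => T (s - t) (F t (v t) (volterra H s₀ v t))) volume s₀ s := fun v hv => by
    have := continuous_volterra (s₀ := s₀) hH hv
    exact Continuous.intervalIntegrable (by fun_prop) _ _
  have hdiff : mildMap T F H s₀ y₀ w s - mildMap T F H s₀ y₀ w' s = ∫ t in s₀..s,
      T (s - t) (F t (w t) (volterra H s₀ w t) - F t (w' t) (volterra H s₀ w' t)) := by
    simp only [mildMap, map_sub]
    rw [integral_sub (hint w hw) (hint w' hw')]
    abel
  have hpoint : ∀ t ∈ uIoc s₀ s,
      ‖T (s - t) (F t (w t) (volterra H s₀ w t) - F t (w' t) (volterra H s₀ w' t))‖ ≤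
        M * (KF * (1 + KH * (S - s₀)) * d) := by
    intro t ht
    rw [uIoc_of_le hs.1] at ht
    have hV := norm_volterra_sub_le (s₀ := s₀) hH hHlip hKH hw hw' hd t
    have habs : |t - s₀| ≤ S - s₀ :=
      abs_sub_le_iff.2 ⟨by linarith [ht.2, hs.2], by linarith [ht.1, hs.1, hs.2]⟩
    calc _ ≤ M * ‖F t (w t) (volterra H s₀ w t) - F t (w' t) (volterra H s₀ w' t)‖ :=
          (T _).le_of_opNorm_le (hTM _) _
      _ ≤ M * (KF * (d + KH * d * (S - s₀))) := by
          gcongr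
          refine (hFlip _ _ _ _ _).trans ?_
          gcongr
          · exact hd t
          · exact hV.trans (by gcongr)
      _ = M * (KF * (1 + KH * (S - s₀)) * d) := by ring
  have habs : |s - s₀| ≤ S - s₀ := abs_sub_le_iff.2 ⟨by linarith [hs.2], by linarith [hs.1, hs.2]⟩
  rw [hdiff]
  calc _ ≤ M * (KF * (1 + KH * (S - s₀)) * d) * |s - s₀| := norm_integral_le_of_norm_le_const hpoint
    _ ≤ M * (KF * (1 + KH * (S - s₀)) * d) * (S - s₀) := by gcongr
    _ = M * (S - s₀) * KF * (1 + KH * (S - s₀)) * d := by ring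

end Estimates

section Contraction

variable (y₀) in
noncomputable def mildMapOnIcc (hle : s₀ ≤ S) (hT : Continuous fun p : ℝ × Y => T p.1 p.2)
    (hF : Continuous fun p : ℝ × Y × Y => F p.1 p.2.1 p.2.2)
    (hH : Continuous fun p : ℝ × ℝ × Y => H p.1 p.2.1 p.2.2) (u : C(Icc s₀ S, Y)) :
    C(Icc s₀ S, Y) :=
  ⟨fun s => mildMap T F H s₀ y₀ (IccExtend hle u) s,
    (continuous_mildMap hT hF hH u.continuous.Icc_extend').comp continuous_subtype_val⟩

variable {hle : s₀ ≤ S} {hT : Continuous fun p : ℝ × Y => T p.1 p.2}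
  {hF : Continuous fun p : ℝ × Y × Y => F p.1 p.2.1 p.2.2}
  {hH : Continuous fun p : ℝ × ℝ × Y => H p.1 p.2.1 p.2.2}

theorem mildMapOnIcc_mk_domRestrict {z : ℝ → Y} (hz : ContinuousOn z (Icc s₀ S)) (s : Icc s₀ S) :
    mildMapOnIcc y₀ hle hT hF hH ⟨(Icc s₀ S).domRestrict z, hz.domRestrict⟩ s =
      mildMap T F H s₀ y₀ z s :=
  mildMap_congr (fun _ _ => rfl) (fun _ _ => rfl) (fun _ _ _ _ => rfl)
    (fun _ ht => IccExtend_of_mem hle _ ht) s.2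

theorem contractingWith_mildMapOnIcc {M KF KH : ℝ} (hTM : ∀ t, ‖T t‖ ≤ M)
    (hFlip : ∀ t x₁ x₂ y₁ y₂, ‖F t x₁ y₁ - F t x₂ y₂‖ ≤ KF * (‖x₁ - x₂‖ + ‖y₁ - y₂‖))
    (hKF : 0 ≤ KF) (hHlip : ∀ t τ y₁ y₂, ‖H t τ y₁ - H t τ y₂‖ ≤ KH * ‖y₁ - y₂‖) (hKH : 0 ≤ KH)
    (hsmall : M * (S - s₀) * KF * (1 + KH * (S - s₀)) < 1) :
    ContractingWith (M * (S - s₀) * KF * (1 + KH * (S - s₀))).toNNReal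
      (mildMapOnIcc y₀ hle hT hF hH) := by
  refine ⟨Real.toNNReal_lt_one.2 hsmall, LipschitzWith.of_dist_le_mul fun u v => ?_⟩
  have hM : 0 ≤ M := (norm_nonneg _).trans (hTM 0)
  have hS : 0 ≤ S - s₀ := sub_nonneg.2 hle
  rw [Real.coe_toNNReal _ (by positivity), ContinuousMap.dist_le (by positivity)]
  intro s
  rw [dist_eq_norm]
  refine norm_mildMap_sub_le hT hTM hF hFlip hKF hH hHlip hKH u.continuous.Icc_extend'
    v.continuous.Icc_extend' (fun t => ?_) s.2
  rw [← dist_eq_norm, IccExtend_apply, IccExtend_apply]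
  exact ContinuousMap.dist_apply_le_dist _

end Contraction

theorem exists_unique_continuousOn_eq_mildMap [CompleteSpace Y] {M KF KH : ℝ} (hle : s₀ ≤ S)
    (hT : Continuous fun p : ℝ × Y => T p.1 p.2) (hTM : ∀ t, ‖T t‖ ≤ M)
    (hF : Continuous fun p : ℝ × Y × Y => F p.1 p.2.1 p.2.2)
    (hFlip : ∀ t x₁ x₂ y₁ y₂, ‖F t x₁ y₁ - F t x₂ y₂‖ ≤ KF * (‖x₁ - x₂‖ + ‖y₁ - y₂‖))
    (hKF : 0 ≤ KF) (hH : Continuous fun p : ℝ × ℝ × Y => H p.1 p.2.1 p.2.2)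
    (hHlip : ∀ t τ y₁ y₂, ‖H t τ y₁ - H t τ y₂‖ ≤ KH * ‖y₁ - y₂‖) (hKH : 0 ≤ KH)
    (hsmall : M * (S - s₀) * KF * (1 + KH * (S - s₀)) < 1) :
    ∃ y : ℝ → Y, (ContinuousOn y (Icc s₀ S) ∧ ∀ s ∈ Icc s₀ S, y s = mildMap T F H s₀ y₀ y s) ∧
      ∀ z : ℝ → Y, ContinuousOn z (Icc s₀ S) →
        (∀ s ∈ Icc s₀ S, z s = mildMap T F H s₀ y₀ z s) → ∀ s ∈ Icc s₀ S, z s = y s := by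
  have hΦ := contractingWith_mildMapOnIcc (y₀ := y₀) (hle := hle) (hT := hT) (hF := hF) (hH := hH)
    hTM hFlip hKF hHlip hKH hsmall
  set u := hΦ.fixedPoint
  have hu : mildMapOnIcc y₀ hle hT hF hH u = u := hΦ.fixedPoint_isFixedPt
  refine ⟨IccExtend hle u, ⟨u.continuous.Icc_extend'.continuousOn, fun s hs => ?_⟩,
    fun z hz hzeq s hs => ?_⟩
  · exact (IccExtend_of_mem hle u hs).trans (DFunLike.congr_fun hu ⟨s, hs⟩).symm
  · have hzu : (⟨(Icc s₀ S).domRestrict z, hz.domRestrict⟩ : C(Icc s₀ S, Y)) = u := by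
      refine hΦ.fixedPoint_unique (ContinuousMap.ext fun s => ?_)
      exact (mildMapOnIcc_mk_domRestrict hz s).trans (hzeq s s.2).symm
    rw [IccExtend_of_mem hle u hs, ← hzu]
    rfl

end MildSolution

section Clamp

variable {Y : Type*} [NormedAddCommGroup Y] [NormedSpace ℝ Y] {T : ℝ → Y →L[ℝ] Y} {M α : ℝ}

theorem norm_apply_max_zero_le (hα : 0 ≤ α) (hTbound : ∀ t ≥ (0 : ℝ), ‖T t‖ ≤ M * Real.exp (-α * t))
    (t : ℝ) : ‖T (max t 0)‖ ≤ M := by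
  have hM : 0 ≤ M := by simpa using (norm_nonneg _).trans (hTbound 0 le_rfl)
  have hexp : Real.exp (-α * max t 0) ≤ 1 :=
    Real.exp_le_one_iff.2 (by nlinarith [le_max_right t 0])
  calc ‖T (max t 0)‖ ≤ M * Real.exp (-α * max t 0) := hTbound _ (le_max_right t 0)
    _ ≤ M := mul_le_of_le_one_right hM hexp

theorem continuous_apply_max_zero (hα : 0 ≤ α)
    (hTcont : ∀ x : Y, ContinuousOn (fun t => T t x) (Ici 0))
    (hTbound : ∀ t ≥ (0 : ℝ), ‖T t‖ ≤ M * Real.exp (-α * t)) :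
    Continuous fun p : ℝ × Y => T (max p.1 0) p.2 :=
  continuous_apply_of_forall_norm_le
    (fun x => (hTcont x).comp_continuous (by fun_prop) fun t => le_max_right t 0)
    (norm_apply_max_zero_le hα hTbound)

end Clamp

theorem exists_unique_mild_solution_interval_general
    {Y : Type*} [NormedAddCommGroup Y] [NormedSpace ℝ Y] [CompleteSpace Y]
    (T : ℝ → Y →L[ℝ] Y) (M α : ℝ) (hα : 0 < α)
    (hTcont : ∀ x : Y, ContinuousOn (fun t => T t x) (Set.Ici (0 : ℝ)))
    (hTbound : ∀ t ≥ (0 : ℝ), ‖T t‖ ≤ M * Real.exp (-α * t))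
    (s₀ S : ℝ) (hs₀S : s₀ < S) (y₀ : Y)
    (F : ℝ → Y → Y → Y)
    (hFcont : ContinuousOn (fun p : ℝ × Y × Y => F p.1 p.2.1 p.2.2)
      (Set.Icc s₀ S ×ˢ (Set.univ : Set (Y × Y))))
    (LF : ℝ → ℝ) (hLFcont : ContinuousOn LF (Set.Icc s₀ S))
    (hLF0 : ∀ s ∈ Set.Icc s₀ S, 0 ≤ LF s)
    (hFlip : ∀ s ∈ Set.Icc s₀ S, ∀ x₁ x₂ y₁ y₂ : Y,
      ‖F s x₁ y₁ - F s x₂ y₂‖ ≤ LF s * (‖x₁ - x₂‖ + ‖y₁ - y₂‖))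
    (H : ℝ → ℝ → Y → Y)
    (hHcont : ContinuousOn (fun p : ℝ × ℝ × Y => H p.1 p.2.1 p.2.2)
      (Set.Icc s₀ S ×ˢ Set.Icc s₀ S ×ˢ (Set.univ : Set Y)))
    (LH : ℝ → ℝ) (hLHcont : ContinuousOn LH (Set.Icc s₀ S))
    (hLH0 : ∀ s ∈ Set.Icc s₀ S, 0 ≤ LH s)
    (hHlip : ∀ t ∈ Set.Icc s₀ S, ∀ s ∈ Set.Icc s₀ S, ∀ y₁ y₂ : Y,
      ‖H t s y₁ - H t s y₂‖ ≤ LH s * ‖y₁ - y₂‖)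
    (hsmall : M * (S - s₀) * sSup (LF '' Set.Icc s₀ S) *
      (1 + sSup (LH '' Set.Icc s₀ S) * (S - s₀)) < 1) :
    ∃ y : ℝ → Y,
      (ContinuousOn y (Set.Icc s₀ S) ∧
        ∀ s ∈ Set.Icc s₀ S,
          y s = T (s - s₀) y₀ +
            ∫ t in s₀..s, T (s - t) (F t (y t) (∫ τ in s₀..t, H t τ (y τ)))) ∧
      ∀ z : ℝ → Y, ContinuousOn z (Set.Icc s₀ S) →
        (∀ s ∈ Set.Icc s₀ S,
          z s = T (s - s₀) y₀ +
            ∫ t in s₀..s, T (s - t) (F t (z t) (∫ τ in s₀..t, H t τ (z τ)))) →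
        ∀ s ∈ Set.Icc s₀ S, z s = y s := by
  have hle := hs₀S.le
  have hs₀ : s₀ ∈ Icc s₀ S := left_mem_Icc.2 hle
  let p : ℝ → ℝ := fun t => projIcc s₀ S hle t
  have hp : ∀ t, p t ∈ Icc s₀ S := fun t => (projIcc s₀ S hle t).2
  obtain ⟨y, ⟨hyc, hy⟩, huniq⟩ := MildSolution.exists_unique_continuousOn_eq_mildMap (y₀ := y₀) hle
    (continuous_apply_max_zero hα.le hTcont hTbound) (norm_apply_max_zero_le hα.le hTbound)
    (hFcont.comp_continuous (f := fun q : ℝ × Y × Y => (p q.1, q.2)) (by fun_prop)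
      fun q => ⟨hp q.1, mem_univ _⟩)
    (fun t x₁ x₂ y₁ y₂ => (hFlip _ (hp t) x₁ x₂ y₁ y₂).trans
      (by gcongr; exact hLFcont.le_sSup_image_Icc (hp t)))
    ((hLF0 s₀ hs₀).trans (hLFcont.le_sSup_image_Icc hs₀))
    (hHcont.comp_continuous (f := fun q : ℝ × ℝ × Y => (p q.1, p q.2.1, q.2.2)) (by fun_prop)
      fun q => ⟨hp q.1, hp q.2.1, mem_univ _⟩)
    (fun t τ y₁ y₂ => (hHlip _ (hp t) _ (hp τ) y₁ y₂).trans
      (by gcongr; exact hLHcont.le_sSup_image_Icc (hp τ)))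
    ((hLH0 s₀ hs₀).trans (hLHcont.le_sSup_image_Icc hs₀)) hsmall
  have hclamp : ∀ w s, s ∈ Icc s₀ S → MildSolution.mildMap (fun t => T (max t 0)) (fun t => F (p t))
      (fun t τ => H (p t) (p τ)) s₀ y₀ w s = MildSolution.mildMap T F H s₀ y₀ w s := fun w s hs =>
    MildSolution.mildMap_congr (fun t ht => by simp only [max_eq_left ht.1])
      (fun t ht => by simp only [p, projIcc_of_mem hle ht])
      (fun t ht τ hτ => by simp only [p, projIcc_of_mem hle ht, projIcc_of_mem hle hτ])
      (fun _ _ => rfl) hs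
  exact ⟨y, ⟨hyc, fun s hs => (hy s hs).trans (hclamp y s hs)⟩,
    fun z hz hzeq s hs => huniq z hz (fun s hs => (hzeq s hs).trans (hclamp z s hs).symm) s hs⟩

/-- Existence and uniqueness of the mild solution on a compact interval `[s₀, S]`:
under Lipschitz conditions on `F` and `H` and the smallness condition
`M (S - s₀) L_F* (1 + L_H* (S - s₀)) < 1`, there is a unique continuous
`y : [s₀, S] → Y` with
`y s = T (s - s₀) y₀ + ∫_{s₀}^s T (s - t) F (t, y t, ∫_{s₀}^t H (t, τ, y τ) dτ) dt`. -/
theorem exists_unique_mild_solution_interval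
    {Y : Type*} [NormedAddCommGroup Y] [NormedSpace ℝ Y] [CompleteSpace Y]
    (T : ℝ → Y →L[ℝ] Y) (M α : ℝ) (hM : 1 ≤ M) (hα : 0 < α)
    (hT0 : T 0 = ContinuousLinearMap.id ℝ Y)
    (hTadd : ∀ t ≥ (0 : ℝ), ∀ s ≥ (0 : ℝ), T (t + s) = (T t).comp (T s))
    (hTcont : ∀ x : Y, ContinuousOn (fun t => T t x) (Set.Ici (0 : ℝ)))
    (hTbound : ∀ t ≥ (0 : ℝ), ‖T t‖ ≤ M * Real.exp (-α * t))
    (s₀ S : ℝ) (hs₀S : s₀ < S) (y₀ : Y)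
    (F : ℝ → Y → Y → Y)
    (hFcont : ContinuousOn (fun p : ℝ × Y × Y => F p.1 p.2.1 p.2.2)
      (Set.Icc s₀ S ×ˢ (Set.univ : Set (Y × Y))))
    (LF : ℝ → ℝ) (hLFcont : ContinuousOn LF (Set.Icc s₀ S))
    (hLF0 : ∀ s ∈ Set.Icc s₀ S, 0 ≤ LF s)
    (hFlip : ∀ s ∈ Set.Icc s₀ S, ∀ x₁ x₂ y₁ y₂ : Y,
      ‖F s x₁ y₁ - F s x₂ y₂‖ ≤ LF s * (‖x₁ - x₂‖ + ‖y₁ - y₂‖))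
    (H : ℝ → ℝ → Y → Y)
    (hHcont : ContinuousOn (fun p : ℝ × ℝ × Y => H p.1 p.2.1 p.2.2)
      (Set.Icc s₀ S ×ˢ Set.Icc s₀ S ×ˢ (Set.univ : Set Y)))
    (LH : ℝ → ℝ) (hLHcont : ContinuousOn LH (Set.Icc s₀ S))
    (hLH0 : ∀ s ∈ Set.Icc s₀ S, 0 ≤ LH s)
    (hHlip : ∀ t ∈ Set.Icc s₀ S, ∀ s ∈ Set.Icc s₀ S, ∀ y₁ y₂ : Y,
      ‖H t s y₁ - H t s y₂‖ ≤ LH s * ‖y₁ - y₂‖)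
    (MF : ℝ) (hMF : ∀ s ∈ Set.Icc s₀ S, ∀ z : Y, ‖F s 0 z‖ ≤ MF)
    (hsmall : M * (S - s₀) * sSup (LF '' Set.Icc s₀ S) *
      (1 + sSup (LH '' Set.Icc s₀ S) * (S - s₀)) < 1) :
    ∃ y : ℝ → Y,
      (ContinuousOn y (Set.Icc s₀ S) ∧
        ∀ s ∈ Set.Icc s₀ S,
          y s = T (s - s₀) y₀ +
            ∫ t in s₀..s, T (s - t) (F t (y t) (∫ τ in s₀..t, H t τ (y τ)))) ∧
      ∀ z : ℝ → Y, ContinuousOn z (Set.Icc s₀ S) →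
        (∀ s ∈ Set.Icc s₀ S,
          z s = T (s - s₀) y₀ +
            ∫ t in s₀..s, T (s - t) (F t (z t) (∫ τ in s₀..t, H t τ (z τ)))) →
        ∀ s ∈ Set.Icc s₀ S, z s = y s :=
  exists_unique_mild_solution_interval_general T M α hα hTcont hTbound s₀ S hs₀S y₀ F hFcont LF
    hLFcont hLF0 hFlip H hHcont LH hLHcont hLH0 hHlip hsmall
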